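/- Let t, q be elements of a commutative ring. For every integer k ≥ 0: T_k(t,q) = Σ_{j=0}^{k} (−q)^{j^2} · ( Σ_{λ ⊆ B(j, k−j)} q^{2|λ|} · (1−t^2)^{dist(λ)} + t · Σ_{λ ⊆ B(j−1, k−j)} q^{2|λ|} · (1−t^2)^{dist(λ)} ), where for j = 0 the second inner sum is taken to be 0. -/

import Mathlib

/-- The polynomials `T_k(t,q)` defined by `T_0 = 1` and, for `k ≥ 1`,
`T_k = T_{k-1} + (1+t)(-q)^{k²} + (1-t²) ∑_{i=1}^{k-1} (-q)^{k²-i²} T_{i-1}`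
(below the sum is reindexed by `i ↦ i+1`). -/
def T {R : Type*} [CommRing R] (t q : R) : ℕ → R
  | 0 => 1
  | (k+1) => T t q k + (1 + t) * (-q) ^ ((k+1)^2) +
      (1 - t^2) * ∑ i ∈ (Finset.range k).attach,
        (-q) ^ ((k+1)^2 - (i.1+1)^2) * T t q i.1
decreasing_by
  · exact Nat.lt_succ_self k
  · exact Nat.lt_succ_of_lt (Finset.mem_range.mp i.2)

/-- `f n h` with `f 0 0 = 1`, `f 0 h = 0` for `h ≥ 1`, `f n h = 0` for `h < 0`, and
`f n h = (1-q^h) f (n-1) (h-1) + (1-t q^{h+1}) f (n-1) (h+1)`; at `h = 0` the first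
term vanishes since `1 - q^0 = 0`. -/
def f {R : Type*} [CommRing R] (t q : R) : ℕ → ℕ → R
  | 0, h => if h = 0 then 1 else 0
  | (n+1), 0 => (1 - t * q) * f t q n 1
  | (n+1), (h+1) => (1 - q^(h+1)) * f t q n h + (1 - t * q^(h+2)) * f t q n (h+2)

/-- `Ẽ_n(t,q) = f(2n,0)`, which is `(1-q)^{2n}` times the `(t,q)`-Euler number. -/
def Etilde {R : Type*} [CommRing R] (t q : R) (n : ℕ) : R := f t q (2*n) 0

/-- Binomial coefficient with integer lower index, `0` when the lower index is negative. -/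
def binom (n : ℕ) (m : ℤ) : ℤ := if 0 ≤ m then (n.choose m.toNat : ℤ) else 0

/-- q-Pochhammer symbol `(a;q)_n = ∏_{j=0}^{n-1} (1 - a q^j)`. -/
def qPoch {K : Type*} [CommRing K] (a q : K) (n : ℕ) : K :=
  ∏ j ∈ Finset.range n, (1 - a * q ^ j)

/-- Gaussian binomial coefficient `[n choose k]_q = (q;q)_n / ((q;q)_k (q;q)_{n-k})`,
equal to `0` whenever `k < 0` or `k > n`. -/
def gauss {K : Type*} [Field K] (q : K) (n k : ℤ) : K :=
  if 0 ≤ k ∧ k ≤ n then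
    qPoch q q n.toNat / (qPoch q q k.toNat * qPoch q q (n - k).toNat)
  else 0

/-- Number of distinct (positive) part sizes of the partition encoded by an
antitone function `Fin m → Fin (n+1)`. -/
def distCard {m n : ℕ} (g : Fin m → Fin (n+1)) : ℕ :=
  ((Finset.univ.image fun i => ((g i : ℕ))).erase 0).card

/-- `∑_{λ ⊆ B(m,n)} x^{dist(λ)} q^{|λ|}`: partitions in the `m × n` box are encoded
as antitone functions `Fin m → Fin (n+1)`. -/
def boxSum {R : Type*} [CommRing R] (x q : R) (m n : ℕ) : R :=
  ∑ g ∈ Finset.univ.filter (fun g : Fin m → Fin (n+1) => ∀ i j : Fin m, i ≤ j → g j ≤ g i),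
    x ^ distCard g * q ^ (∑ i, (g i : ℕ))

open Finset

/-!
Write `B(m, n)` for `boxSum x q m n`. Sorting the partitions in an `m × (n+1)` box by the
number `r` of parts equal to `n+1` gives the box recurrence
`B(m, n+1) = B(m, n) + x ∑_{r ≥ 1} q^{(n+1) r} B(m-r, n)` (`IsBoxRecurrent`), and the shifted
family `B(j-1, n)` obeys it as well. For any family `c` with this recurrence (at `q²`), the
diagonal sums `D_k = ∑_j (-q)^{j²} c(j, k-j)` satisfy the recursion defining `T`: in `D_{k+1}`
the terms with `r ≥ 1` regroup, via `(i, a) = (k-r, j-r)` and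
`j² + 2(k+1-j) r = (k+1)² - (i+1)² + a²`, into `x ∑_i (-q)^{(k+1)² - (i+1)²} D_i`.
-/

lemma Fin.antitone_cons {α : Type*} [Preorder α] {n : ℕ} {a : α} {f : Fin n → α} :
    Antitone (Fin.cons a f : Fin (n + 1) → α) ↔ (∀ i, f i ≤ a) ∧ Antitone f := by
  rw [antitone_iff_forall_lt, antitone_iff_forall_lt]
  exact Fin.liftFun_cons (· ≥ ·)

section BoxSum

variable {R : Type*} [CommRing R]

def antitoneFns (m n : ℕ) : Finset (Fin m → Fin (n + 1)) :=
  univ.filter fun g => ∀ i j : Fin m, i ≤ j → g j ≤ g i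

@[simp]
lemma mem_antitoneFns {m n : ℕ} {g : Fin m → Fin (n + 1)} :
    g ∈ antitoneFns m n ↔ Antitone g := by
  simp [antitoneFns, Antitone]

def boxWeight {m n : ℕ} (x q : R) (g : Fin m → Fin (n + 1)) : R :=
  x ^ distCard g * q ^ ∑ i, (g i : ℕ)

lemma boxSum_eq_sum_antitoneFns (x q : R) (m n : ℕ) :
    boxSum x q m n = ∑ g ∈ antitoneFns m n, boxWeight x q g := rfl

lemma boxSum_zero_right (x q : R) (m : ℕ) : boxSum x q m 0 = 1 := by
  have hweight (g : Fin m → Fin 1) : boxWeight x q g = 1 := by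
    have hdist : distCard g = 0 := by
      rw [distCard, card_eq_zero, ← subset_empty]
      intro a
      simp only [Fin.val_eq_zero, mem_erase, mem_image]
      grind
    simp [boxWeight, hdist, Fin.val_eq_zero]
  have hall : antitoneFns m 0 = univ :=
    eq_univ_of_forall fun _ =>
      mem_antitoneFns.2 fun _ _ _ => (Subsingleton.elim (α := Fin 1) _ _).le
  simp [boxSum_eq_sum_antitoneFns, hweight, hall]

lemma boxWeight_castSucc {m n : ℕ} (x q : R) (h : Fin m → Fin (n + 1)) :
    boxWeight x q (Fin.castSucc ∘ h) = boxWeight x q h := by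
  simp [boxWeight, distCard]

lemma boxWeight_cons_last {m n : ℕ} (x q : R) (h : Fin m → Fin (n + 2)) :
    boxWeight x q (Fin.cons (Fin.last (n + 1)) h : Fin (m + 1) → Fin (n + 2)) =
      q ^ (n + 1) *
        if ∃ i, h i = Fin.last (n + 1) then boxWeight x q h else x * boxWeight x q h := by
  have himage :
      (univ.image fun i =>
        ((Fin.cons (Fin.last (n + 1)) h : Fin (m + 1) → Fin (n + 2)) i : ℕ)) =
        insert (n + 1) (univ.image fun i => (h i : ℕ)) := by
    ext a; simp [Fin.exists_fin_succ, eq_comm (a := a)]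
  have hmem :
      n + 1 ∈ (univ.image fun i => (h i : ℕ)).erase 0 ↔ ∃ i, h i = Fin.last (n + 1) := by
    simp only [mem_erase, mem_image, mem_univ, true_and, Fin.ext_iff, Fin.val_last]
    simp
  rw [boxWeight, boxWeight, distCard, distCard, himage, erase_insert_of_ne (Nat.succ_ne_zero n),
    card_insert_eq_ite, Fin.sum_univ_succ]
  simp only [hmem, Fin.cons_zero, Fin.cons_succ, Fin.val_last]
  split_ifs <;> ring

lemma sum_antitoneFns_not_exists_last (x q : R) (m n : ℕ) :
    ∑ g ∈ antitoneFns m (n + 1) with ¬∃ i, g i = Fin.last (n + 1), boxWeight x q g =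
      boxSum x q m n := by
  rw [boxSum_eq_sum_antitoneFns]
  symm
  refine sum_bij' (fun h _ => Fin.castSucc ∘ h)
    (fun g hg i => (g i).castPred fun hi => (mem_filter.1 hg).2 ⟨i, hi⟩) ?_ ?_ ?_ ?_ ?_
  · intro h hh
    simp only [mem_filter, mem_antitoneFns] at hh ⊢
    exact ⟨Fin.strictMono_castSucc.monotone.comp_antitone hh,
      fun ⟨i, hi⟩ => Fin.castSucc_ne_last _ hi⟩
  · intro g hg
    simp only [mem_filter, mem_antitoneFns] at hg ⊢
    intro i j hij
    simpa [Fin.castPred_le_castPred_iff] using hg.1 hij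
  · intro h _; ext i; simp
  · intro g _; ext i; simp
  · intro h _; exact (boxWeight_castSucc x q h).symm

def boxSumWithMaxPart (x q : R) (m n : ℕ) : R :=
  ∑ g ∈ antitoneFns m (n + 1) with ∃ i, g i = Fin.last (n + 1), boxWeight x q g

lemma boxSum_succ_right_eq_add (x q : R) (m n : ℕ) :
    boxSum x q m (n + 1) = boxSum x q m n + boxSumWithMaxPart x q m n := by
  rw [boxSum_eq_sum_antitoneFns,
    ← sum_filter_add_sum_filter_not _ fun g => ∃ i, g i = Fin.last (n + 1),
    sum_antitoneFns_not_exists_last, add_comm, boxSumWithMaxPart]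

-- Remove the first part `n+1`; the number of distinct parts drops exactly when no other
-- part is `n+1`.
lemma boxSumWithMaxPart_succ_left (x q : R) (m n : ℕ) :
    boxSumWithMaxPart x q (m + 1) n =
      q ^ (n + 1) * (x * boxSum x q m n + boxSumWithMaxPart x q m n) := by
  have hcons : boxSumWithMaxPart x q (m + 1) n = ∑ h ∈ antitoneFns m (n + 1),
      boxWeight x q (Fin.cons (Fin.last (n + 1)) h : Fin (m + 1) → Fin (n + 2)) := by
    have hhead {g : Fin (m + 1) → Fin (n + 2)}
        (hg : g ∈ (antitoneFns (m + 1) (n + 1)).filter fun g => ∃ i, g i = Fin.last (n + 1)) :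
        g 0 = Fin.last (n + 1) := by
      obtain ⟨hanti, i, hi⟩ := by simpa only [mem_filter, mem_antitoneFns] using hg
      exact Fin.last_le_iff.1 (hi ▸ hanti (Fin.zero_le i))
    refine sum_nbij' Fin.tail (fun h => Fin.cons (Fin.last (n + 1)) h) ?_ ?_ ?_ ?_ ?_
    · intro g hg
      exact mem_antitoneFns.2 ((mem_antitoneFns.1 (mem_filter.1 hg).1).comp_monotone
        Fin.strictMono_succ.monotone)
    · intro h hh
      simp only [mem_filter, mem_antitoneFns, Fin.antitone_cons] at hh ⊢
      exact ⟨⟨fun i => Fin.le_last _, hh⟩, 0, rfl⟩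
    · intro g hg
      simpa [hhead hg] using Fin.cons_self_tail g
    · intro h _; exact Fin.tail_cons _ _
    · intro g hg
      rw [← hhead hg, Fin.cons_self_tail]
  rw [hcons]
  simp only [boxWeight_cons_last, ← mul_sum, sum_ite, ← sum_antitoneFns_not_exists_last]
  rw [boxSumWithMaxPart]
  ring

end BoxSum

section Recurrence

variable {R : Type*} [CommRing R]

def IsBoxRecurrent (x q : R) (c : ℕ → ℕ → R) : Prop :=
  ∀ m n, c m (n + 1) = c m n + x * ∑ r ∈ range m, q ^ ((n + 1) * (r + 1)) * c (m - (r + 1)) n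

lemma boxSumWithMaxPart_eq (x q : R) (m n : ℕ) :
    boxSumWithMaxPart x q m n =
      x * ∑ r ∈ range m, q ^ ((n + 1) * (r + 1)) * boxSum x q (m - (r + 1)) n := by
  induction m with
  | zero => simp [boxSumWithMaxPart]
  | succ m ih =>
    have hpow (r : ℕ) : q ^ ((n + 1) * (r + 1 + 1)) = q ^ (n + 1) * q ^ ((n + 1) * (r + 1)) := by
      ring
    rw [boxSumWithMaxPart_succ_left, ih, sum_range_succ']
    simp only [hpow, Nat.add_sub_add_right, mul_assoc, ← mul_sum]
    simp only [zero_add, mul_one, tsub_zero]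
    ring

lemma isBoxRecurrent_boxSum (x q : R) : IsBoxRecurrent x q (boxSum x q) := fun m n => by
  rw [boxSum_succ_right_eq_add, boxSumWithMaxPart_eq]

namespace IsBoxRecurrent

variable {x q : R} {c d : ℕ → ℕ → R}

lemma add (hc : IsBoxRecurrent x q c) (hd : IsBoxRecurrent x q d) :
    IsBoxRecurrent x q fun m n => c m n + d m n := fun m n => by
  simp only [hc m n, hd m n, mul_add, sum_add_distrib]
  ring

lemma const_mul (hc : IsBoxRecurrent x q c) (t : R) :
    IsBoxRecurrent x q fun m n => t * c m n := fun m n => by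
  simp only [hc m n, mul_add, mul_sum]
  congr 1
  refine sum_congr rfl fun r _ => ?_
  ring

lemma shift (hc : IsBoxRecurrent x q c) :
    IsBoxRecurrent x q fun m n => if m = 0 then 0 else c (m - 1) n := by
  rintro (_ | m) n
  · simp
  · rw [sum_range_succ]
    simp only [Nat.add_sub_cancel, Nat.add_sub_add_right, Nat.sub_self, if_true,
      if_neg m.succ_ne_zero, hc m n]
    rw [mul_zero, add_zero]
    congr 2
    refine sum_congr rfl fun r hr => ?_
    rw [if_neg (by grind), Nat.sub_sub]

end IsBoxRecurrent

end Recurrence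

lemma sum_range_sum_range_reindex {M : Type*} [AddCommMonoid M] (G : ℕ → ℕ → M) (k : ℕ) :
    ∑ j ∈ range (k + 1), ∑ r ∈ range j, G (k - 1 - r) (j - 1 - r) =
      ∑ i ∈ range k, ∑ a ∈ range (i + 1), G i a := by
  rw [sum_sigma', sum_sigma']
  refine sum_nbij' (fun p => ⟨k - 1 - p.2, p.1 - 1 - p.2⟩)
    (fun p => ⟨p.2 + (k - p.1), k - 1 - p.1⟩) ?_ ?_ ?_ ?_ ?_ <;>
    rintro ⟨j, r⟩ h <;> simp only [mem_sigma, mem_range] at h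
  · simp only [mem_sigma, mem_range]; omega
  · simp only [mem_sigma, mem_range]; omega
  · simp only [Sigma.mk.injEq, heq_eq_eq]; omega
  · simp only [Sigma.mk.injEq, heq_eq_eq]; omega
  · rfl

section Diagonal

variable {R : Type*} [CommRing R]

def diagSum (q : R) (c : ℕ → ℕ → R) (k : ℕ) : R :=
  ∑ j ∈ range (k + 1), (-q) ^ (j ^ 2) * c j (k - j)

lemma IsBoxRecurrent.diagSum_succ {x q : R} {c : ℕ → ℕ → R}
    (hc : IsBoxRecurrent x (q ^ 2) c) (k : ℕ) :
    diagSum q c (k + 1) = diagSum q c k + (-q) ^ ((k + 1) ^ 2) * c (k + 1) 0 +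
      x * ∑ i ∈ range k, (-q) ^ ((k + 1) ^ 2 - (i + 1) ^ 2) * diagSum q c i := by
  set G : ℕ → ℕ → R :=
    fun i a => (-q) ^ ((k + 1) ^ 2 - (i + 1) ^ 2) * ((-q) ^ (a ^ 2) * c a (i - a))
  have hterm : ∀ j ∈ range (k + 1), (-q) ^ (j ^ 2) * c j (k + 1 - j) =
      (-q) ^ (j ^ 2) * c j (k - j) + x * ∑ r ∈ range j, G (k - 1 - r) (j - 1 - r) := by
    intro j hj
    rw [mem_range] at hj
    rw [show k + 1 - j = k - j + 1 by omega, hc, mul_add, mul_left_comm, mul_sum]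
    congr 2
    refine sum_congr rfl fun r hr => ?_
    rw [mem_range] at hr
    obtain ⟨a, rfl⟩ := Nat.exists_eq_add_of_lt hr
    obtain ⟨b, rfl⟩ := Nat.exists_eq_add_of_le (Nat.lt_succ_iff.1 hj)
    have e1 : r + a + 1 + b - (r + a + 1) = b := by omega
    have e2 : r + a + 1 + b - 1 - r = a + b := by omega
    have e3 : r + a + 1 - (r + 1) = a := by omega
    have e4 : r + a + 1 - 1 - r = a := by omega
    have e5 : (r + a + 1 + b + 1) ^ 2 - (a + b + 1) ^ 2 = (r + 1) * (r + 2 * a + 2 * b + 3) := by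
      rw [show (r + a + 1 + b + 1) ^ 2 = (a + b + 1) ^ 2 + (r + 1) * (r + 2 * a + 2 * b + 3) by
        ring, Nat.add_sub_cancel_left]
    simp only [G, e1, e2, e3, e4, e5, Nat.add_sub_cancel_left]
    rw [← neg_sq q, ← pow_mul]
    ring
  rw [diagSum, sum_range_succ, Nat.sub_self, sum_congr rfl hterm, sum_add_distrib, ← mul_sum,
    sum_range_sum_range_reindex]
  simp only [G, diagSum, mul_sum]
  abel

lemma T_succ (t q : R) (k : ℕ) :
    T t q (k + 1) = T t q k + (1 + t) * (-q) ^ ((k + 1) ^ 2) +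
      (1 - t ^ 2) * ∑ i ∈ range k, (-q) ^ ((k + 1) ^ 2 - (i + 1) ^ 2) * T t q i := by
  rw [T, sum_attach (range k) fun i => (-q) ^ ((k + 1) ^ 2 - (i + 1) ^ 2) * T t q i]

lemma T_eq_diagSum (t q : R) (k : ℕ) :
    T t q k = diagSum q (fun j n => boxSum (1 - t ^ 2) (q ^ 2) j n +
      t * if j = 0 then 0 else boxSum (1 - t ^ 2) (q ^ 2) (j - 1) n) k := by
  have hc := (isBoxRecurrent_boxSum (1 - t ^ 2) (q ^ 2)).add
    ((isBoxRecurrent_boxSum (1 - t ^ 2) (q ^ 2)).shift.const_mul t)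
  induction k using Nat.strong_induction_on with
  | _ k ih =>
    cases k with
    | zero => simp [T, diagSum, boxSum_zero_right]
    | succ k =>
      rw [T_succ, hc.diagSum_succ, ih k k.lt_succ_self,
        sum_congr rfl fun i hi => by rw [ih i (by grind)]]
      simp [boxSum_zero_right, mul_comm]

end Diagonal

theorem stmt_9 {R : Type*} [CommRing R] (t q : R) (k : ℕ) :
    T t q k = ∑ j ∈ Finset.range (k+1),
      (-q) ^ (j^2) *
        (boxSum (1 - t^2) (q^2) j (k-j)
          + t * (if j = 0 then 0 else boxSum (1 - t^2) (q^2) (j-1) (k-j))) :=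
  T_eq_diagSum t q k
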